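/- arXiv:1305.2856 — 4 statements merged into one kernel-verified Lean document; each statement's English description precedes it below -/
import Mathlib

section
/- (Theorem: no left invariant non-Riemannian Berwald Randers metric on groups with perfect Lie algebra, algebraic form.) Let 𝔤 be a finite-dimensional real Lie algebra equipped with an inner product ⟨·,·⟩, and let ∇ be the Levi-Civita product of the corresponding left-invariant Riemannian metric. If 𝔤 is perfect, i.e. [𝔤,𝔤] = 𝔤, then every parallel vector X ∈ 𝔤 (meaning ∇_y X = 0 for all y ∈ 𝔤) is zero. Consequently a connected Lie group with perfect Lie algebra admits no left invariant non-Riemannian Randers metric of Berwald type arising from a left invariant Riemannian metric and a left invariant vector field. -/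
/-! Subtracting the Koszul formulas for `∇_y X` and `∇_z X` gives `⟨[y,z], X⟩ = 0` for a parallel
`X`, so `X` is orthogonal to `[𝔤,𝔤]`; when `𝔤` is perfect this forces `⟨X, X⟩ = 0`. -/

theorem LieAlgebra.apply_eq_zero_of_mem_derivedSeries_one {R L M : Type*} [CommRing R]
    [LieRing L] [LieAlgebra R L] [AddCommGroup M] [Module R M] (f : L →ₗ[R] M)
    (hf : ∀ y z : L, f ⁅y, z⁆ = 0) {x : L} (hx : x ∈ derivedSeries R L 1) : f x = 0 := by
  have hle : (derivedSeries R L 1 : Submodule R L) ≤ LinearMap.ker f := by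
    rw [derivedSeries_def, derivedSeriesOfIdeal_succ, derivedSeriesOfIdeal_zero,
      LieIdeal.toLieSubalgebra_toSubmodule, LieSubmodule.lieIdeal_oper_eq_linear_span', Submodule.span_le]
    rintro _ ⟨y, -, z, -, rfl⟩
    exact hf y z
  exact hle hx

theorem inner_lie_eq_zero_of_koszul_of_parallel {K L : Type*} [Field K] [NeZero (2 : K)]
    [LieRing L] [LieAlgebra K L] (ip : L →ₗ[K] L →ₗ[K] K) (nabla : L →ₗ[K] L →ₗ[K] L)
    (koszul : ∀ x y z : L,
      2 * ip (nabla x y) z = ip ⁅x, y⁆ z - ip ⁅y, z⁆ x + ip ⁅z, x⁆ y)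
    {X : L} (hX : ∀ y : L, nabla y X = 0) (y z : L) : ip ⁅y, z⁆ X = 0 := by
  have hyz := koszul y X z
  have hzy := koszul z X y
  simp only [hX, map_zero, LinearMap.zero_apply, mul_zero] at hyz hzy
  have skew : ∀ a b c : L, ip ⁅a, b⁆ c = -ip ⁅b, a⁆ c := fun a b c => by
    rw [← lie_skew b a, map_neg, LinearMap.neg_apply, neg_neg]
  have : (2 : K) * ip ⁅y, z⁆ X = 0 := by
    linear_combination hyz - hzy + skew X y z - skew X z y + skew z y X
  exact (mul_eq_zero.mp this).resolve_left two_ne_zero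

theorem parallel_vector_eq_zero_of_perfect_general
    {V : Type*} [LieRing V] [LieAlgebra ℝ V]
    (hperfect : LieAlgebra.derivedSeries ℝ V 1 = ⊤)
    (ip : V →ₗ[ℝ] V →ₗ[ℝ] ℝ)
    (ip_pos : ∀ x : V, x ≠ 0 → 0 < ip x x)
    (nabla : V →ₗ[ℝ] V →ₗ[ℝ] V)
    (koszul : ∀ x y z : V,
      2 * ip (nabla x y) z = ip ⁅x, y⁆ z - ip ⁅y, z⁆ x + ip ⁅z, x⁆ y)
    (X : V) (hX : ∀ y : V, nabla y X = 0) :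
    X = 0 := by
  have hXX : ip.flip X X = 0 :=
    LieAlgebra.apply_eq_zero_of_mem_derivedSeries_one (ip.flip X)
      (inner_lie_eq_zero_of_koszul_of_parallel ip nabla koszul hX)
      (hperfect ▸ LieSubmodule.mem_top X)
  by_contra hX0
  exact (ip_pos X hX0).ne' hXX

/-- If the Lie algebra is perfect (`[𝔤,𝔤] = 𝔤`, i.e. the first term of the derived series is
everything), then every vector `X` that is parallel with respect to the Levi-Civita product of
a left-invariant Riemannian metric is zero.  This is the algebraic form of the statement that
a connected Lie group with perfect Lie algebra admits no left invariant non-Riemannian Randers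
metric of Berwald type arising from a left invariant Riemannian metric and a left invariant
vector field. -/
theorem parallel_vector_eq_zero_of_perfect
    {V : Type*} [LieRing V] [LieAlgebra ℝ V] [FiniteDimensional ℝ V]
    (hperfect : LieAlgebra.derivedSeries ℝ V 1 = ⊤)
    (ip : V →ₗ[ℝ] V →ₗ[ℝ] ℝ)
    (ip_symm : ∀ x y : V, ip x y = ip y x)
    (ip_pos : ∀ x : V, x ≠ 0 → 0 < ip x x)
    (nabla : V →ₗ[ℝ] V →ₗ[ℝ] V)
    (koszul : ∀ x y z : V,
      2 * ip (nabla x y) z = ip ⁅x, y⁆ z - ip ⁅y, z⁆ x + ip ⁅z, x⁆ y)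
    (X : V) (hX : ∀ y : V, nabla y X = 0) :
    X = 0 :=
  parallel_vector_eq_zero_of_perfect_general hperfect ip ip_pos nabla koszul X hX
end

section
/- (Corollary for semisimple groups, algebraic form.) Let 𝔤 be a finite-dimensional semisimple real Lie algebra equipped with an inner product ⟨·,·⟩, and let ∇ be the Levi-Civita product of the corresponding left-invariant Riemannian metric. Then every parallel vector X ∈ 𝔤 (meaning ∇_y X = 0 for all y ∈ 𝔤) is zero. Consequently a semisimple connected Lie group admits no left invariant non-Riemannian Randers metric of Berwald type arising from a left invariant Riemannian metric and a left invariant vector field. -/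
/-!
Koszul's formula for `∇_y X` with `X` parallel says that
`⟨[y, X], z⟩ - ⟨[X, z], y⟩ + ⟨[z, y], X⟩` vanishes; its antisymmetric part in `y, z` is
`2 ⟨[z, y], X⟩`, so `X` is orthogonal to every bracket. A semisimple Lie algebra is spanned
by its brackets, hence `⟨X, X⟩ = 0`.
-/

namespace LieAlgebra

variable {R L : Type*} [CommRing R] [LieRing L] [LieAlgebra R L]

lemma IsSemisimple.derivedSeries_one_eq_top [IsSemisimple R L] : derivedSeries R L 1 = ⊤ := by
  rw [eq_top_iff, ← IsSemisimple.sSup_atoms_eq_top]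
  refine sSup_le fun I hI ↦ ?_
  calc I = ⁅I, I⁆ := (lie_eq_self_of_isAtom_of_nonabelian I hI
        (IsSemisimple.non_abelian_of_isAtom I hI)).symm
    _ ≤ ⁅⊤, ⊤⁆ := LieSubmodule.mono_lie le_top le_top

lemma linearMap_eq_zero_of_map_lie_eq_zero {M : Type*} [AddCommGroup M] [Module R M]
    (hL : derivedSeries R L 1 = ⊤) (f : L →ₗ[R] M) (hf : ∀ x y : L, f ⁅x, y⁆ = 0) :
    f = 0 := by
  have hspan : Submodule.span R {⁅x, y⁆ | (x : L) (y : L)} = ⊤ := by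
    rw [← coe_derivedSeries_one_eq, hL, LieIdeal.top_toLieSubalgebra,
      LieSubalgebra.top_toSubmodule]
  exact LinearMap.ext_on hspan fun _ ⟨x, y, hxy⟩ ↦ hxy ▸ hf x y

end LieAlgebra

lemma bilinForm_lie_eq_zero_of_parallel {R L : Type*}
    [CommRing R] [NoZeroDivisors R] [CharZero R] [LieRing L] [LieAlgebra R L]
    (B : LinearMap.BilinForm R L) (nabla : L →ₗ[R] L →ₗ[R] L)
    (koszul : ∀ x y z : L, 2 * B (nabla x y) z = B ⁅x, y⁆ z - B ⁅y, z⁆ x + B ⁅z, x⁆ y)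
    {X : L} (hX : ∀ y : L, nabla y X = 0) (y z : L) : B ⁅y, z⁆ X = 0 := by
  have hyz := koszul z X y
  have hzy := koszul y X z
  rw [hX, ← lie_skew X y] at hyz
  rw [hX, ← lie_skew X z, ← lie_skew z y] at hzy
  simp only [map_zero, LinearMap.zero_apply, mul_zero, map_neg, LinearMap.neg_apply] at hyz hzy
  rw [← add_self_eq_zero]
  linear_combination hzy - hyz

theorem parallel_vector_eq_zero_of_semisimple_general
    {V : Type*} [LieRing V] [LieAlgebra ℝ V]
    [LieAlgebra.IsSemisimple ℝ V]
    (ip : V →ₗ[ℝ] V →ₗ[ℝ] ℝ)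
    (ip_pos : ∀ x : V, x ≠ 0 → 0 < ip x x)
    (nabla : V →ₗ[ℝ] V →ₗ[ℝ] V)
    (koszul : ∀ x y z : V,
      2 * ip (nabla x y) z = ip ⁅x, y⁆ z - ip ⁅y, z⁆ x + ip ⁅z, x⁆ y)
    (X : V) (hX : ∀ y : V, nabla y X = 0) :
    X = 0 := by
  have hperp : ip.flip X = 0 :=
    LieAlgebra.linearMap_eq_zero_of_map_lie_eq_zero
      LieAlgebra.IsSemisimple.derivedSeries_one_eq_top _
      (bilinForm_lie_eq_zero_of_parallel ip nabla koszul hX)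
  by_contra hne
  exact (ip_pos X hne).ne' (LinearMap.congr_fun hperp X)

/-- If the Lie algebra is semisimple, then every vector `X` that is parallel with respect to
the Levi-Civita product of a left-invariant Riemannian metric is zero.  This is the algebraic
form of the statement that a semisimple connected Lie group admits no left invariant
non-Riemannian Randers metric of Berwald type arising from a left invariant Riemannian metric
and a left invariant vector field. -/
theorem parallel_vector_eq_zero_of_semisimple
    {V : Type*} [LieRing V] [LieAlgebra ℝ V] [FiniteDimensional ℝ V]
    [LieAlgebra.IsSemisimple ℝ V]
    (ip : V →ₗ[ℝ] V →ₗ[ℝ] ℝ)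
    (ip_symm : ∀ x y : V, ip x y = ip y x)
    (ip_pos : ∀ x : V, x ≠ 0 → 0 < ip x x)
    (nabla : V →ₗ[ℝ] V →ₗ[ℝ] V)
    (koszul : ∀ x y z : V,
      2 * ip (nabla x y) z = ip ⁅x, y⁆ z - ip ⁅y, z⁆ x + ip ⁅z, x⁆ y)
    (X : V) (hX : ∀ y : V, nabla y X = 0) :
    X = 0 :=
  parallel_vector_eq_zero_of_semisimple_general ip ip_pos nabla koszul X hX
end

section
/- (The quantity θ of Theorem 2.1 vanishes, Lie group case.) Let 𝔤 be a finite-dimensional real Lie algebra with an ad-invariant inner product ⟨·,·⟩₀, let φ : 𝔤 → 𝔤 be linear, self-adjoint and positive-definite with respect to ⟨·,·⟩₀, set ⟨x,y⟩ := ⟨φx,y⟩₀, and let R be the curvature of the Levi-Civita product of ⟨·,·⟩. Then for all Y, U ∈ 𝔤: ⟨Y, R(U,Y)Y⟩ = 0. -/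
/-!
The Koszul formula makes every left multiplication `∇ₓ` skew-adjoint for `⟨·,·⟩`, since the
right-hand side is antisymmetric in `y` and `z`. Skew-adjoint endomorphisms form a Lie
subalgebra, so `R(U,Y) = ⁅∇_U, ∇_Y⁆ - ∇_{[U,Y]}` is skew-adjoint as well, and a skew-adjoint
endomorphism `f` of a symmetric form satisfies `⟨y, f y⟩ = 0`.
-/

open LinearMap (BilinForm)

section SkewAdjoint

variable {R V : Type*} [CommRing R]

section Module

variable [AddCommGroup V] [Module R V] {B : BilinForm R V}

theorem LinearMap.IsSkewAdjoint.apply_self_eq_zero (hB : B.IsSymm) (h2 : IsLeftRegular (2 : R))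
    {f : V → V} (hf : B.IsSkewAdjoint f) (y : V) : B y (f y) = 0 := by
  have h : B y (f y) = -B y (f y) :=
    (hB.eq (f y) y).symm.trans (by rw [hf, Pi.neg_apply, map_neg])
  exact h2 (by linear_combination h)

end Module

namespace LinearMap.BilinForm

variable [LieRing V] [LieAlgebra R V] {B : BilinForm R V}

theorem isSkewAdjoint_of_koszul (hB : B.IsSymm) (h2 : IsLeftRegular (2 : R))
    {nabla : V →ₗ[R] V →ₗ[R] V}
    (koszul : ∀ x y z : V, 2 * B (nabla x y) z = B ⁅x, y⁆ z - B ⁅y, z⁆ x + B ⁅z, x⁆ y)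
    (x : V) : B.IsSkewAdjoint (nabla x) := by
  intro y z
  have hyz := koszul x y z
  have hzy := koszul x z y
  rw [← lie_skew y x, ← lie_skew z y, ← lie_skew x z] at hzy
  simp only [map_neg, LinearMap.neg_apply] at hzy
  rw [Pi.neg_apply, map_neg, hB.eq y (nabla x z)]
  refine h2 ?_
  linear_combination hyz + hzy

variable (nabla : V →ₗ[R] Module.End R V)

def curvature (x y : V) : Module.End R V := ⁅nabla x, nabla y⁆ - nabla ⁅x, y⁆

theorem curvature_apply (x y z : V) :
    curvature nabla x y z = nabla x (nabla y z) - nabla y (nabla x z) - nabla ⁅x, y⁆ z := rfl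

theorem isSkewAdjoint_curvature (h : ∀ x, B.IsSkewAdjoint (nabla x)) (x y : V) :
    B.IsSkewAdjoint (curvature nabla x y) := by
  simp only [← mem_skewAdjointSubmodule] at h ⊢
  exact sub_mem (B.isSkewAdjoint_bracket (h x) (h y)) (h _)

end LinearMap.BilinForm

end SkewAdjoint

open LinearMap.BilinForm in
theorem theta_vanishes_general
    {V : Type*} [LieRing V] [LieAlgebra ℝ V]
    (ip0 : V →ₗ[ℝ] V →ₗ[ℝ] ℝ)
    (ip0_symm : ∀ x y : V, ip0 x y = ip0 y x)
    (φ : V →ₗ[ℝ] V)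
    (φ_sa : ∀ x y : V, ip0 (φ x) y = ip0 x (φ y))
    (nabla : V →ₗ[ℝ] V →ₗ[ℝ] V)
    (koszul : ∀ x y z : V,
      2 * ip0 (φ (nabla x y)) z
        = ip0 (φ ⁅x, y⁆) z - ip0 (φ ⁅y, z⁆) x + ip0 (φ ⁅z, x⁆) y)
    (Y U : V) :
    ip0 (φ Y) (nabla U (nabla Y Y) - nabla Y (nabla U Y) - nabla ⁅U, Y⁆ Y) = 0 := by
  let B : LinearMap.BilinForm ℝ V := ip0 ∘ₗ φ
  have hB : B.IsSymm := ⟨fun x y => (φ_sa x y).trans (ip0_symm x (φ y))⟩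
  have h2 : IsLeftRegular (2 : ℝ) := (IsRegular.of_ne_zero two_ne_zero).left
  have hnabla := isSkewAdjoint_of_koszul hB h2 koszul
  rw [← curvature_apply]
  exact (isSkewAdjoint_curvature nabla hnabla U Y).apply_self_eq_zero hB h2 Y

/-- **The quantity `θ` of Theorem 2.1 vanishes, Lie group case.**
With `⟨x,y⟩ = ip0 (φ x) y`, `nabla` the Levi-Civita product of `⟨·,·⟩` and
`R(x,y)z = ∇ₓ∇_y z − ∇_y ∇ₓ z − ∇_{[x,y]} z`, we have `⟨Y, R(U,Y)Y⟩ = 0`. -/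
theorem theta_vanishes
    {V : Type*} [LieRing V] [LieAlgebra ℝ V] [FiniteDimensional ℝ V]
    (ip0 : V →ₗ[ℝ] V →ₗ[ℝ] ℝ)
    (ip0_symm : ∀ x y : V, ip0 x y = ip0 y x)
    (ip0_pos : ∀ x : V, x ≠ 0 → 0 < ip0 x x)
    (ip0_ad : ∀ x y z : V, ip0 ⁅x, y⁆ z = - ip0 y ⁅x, z⁆)
    (φ : V →ₗ[ℝ] V)
    (φ_sa : ∀ x y : V, ip0 (φ x) y = ip0 x (φ y))
    (φ_pos : ∀ x : V, x ≠ 0 → 0 < ip0 (φ x) x)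
    (nabla : V →ₗ[ℝ] V →ₗ[ℝ] V)
    (koszul : ∀ x y z : V,
      2 * ip0 (φ (nabla x y)) z
        = ip0 (φ ⁅x, y⁆) z - ip0 (φ ⁅y, z⁆) x + ip0 (φ ⁅z, x⁆) y)
    (Y U : V) :
    ip0 (φ Y) (nabla U (nabla Y Y) - nabla Y (nabla U Y) - nabla ⁅U, Y⁆ Y) = 0 :=
  theta_vanishes_general ip0 ip0_symm φ φ_sa nabla koszul Y U
end

section
/- (Numerator of the flag curvature in Theorem 2.2, bi-invariant case.) Let 𝔤 be a finite-dimensional real Lie algebra with an ad-invariant inner product ⟨·,·⟩₀, let X ∈ 𝔤 satisfy ⟨X,X⟩₀ < 1, let F(Z) = √⟨Z,Z⟩₀ + ⟨X,Z⟩₀ be the associated Randers norm with fundamental tensor g_Y, and let R be the curvature of the Levi-Civita product of ⟨·,·⟩₀, so that R(U,Y)Y = (1/4)[Y,[U,Y]]. Then for every pair Y, U ∈ 𝔤 orthonormal with respect to ⟨·,·⟩₀: g_Y(R(U,Y)Y, U) = (1/4)(⟨[Y,[U,Y]], X⟩₀·⟨X,U⟩₀ + ⟨[Y,[U,Y]],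 U⟩₀·(1 + ⟨X,Y⟩₀)). -/
/-!
Ad-invariance collapses the Koszul formula to `∇_x y = ½[x,y]`, and then the Jacobi identity
gives `R(x,y)z = -¼[[x,y],z]`; in particular `W := R(U,Y)Y = ¼[Y,[U,Y]]` is orthogonal to `Y`.
On the plane `Y + sW + tU` the Randers norm is `√(1 + c s² + 2b s t + u t²)` plus an affine
function of `(s,t)`, and its mixed second derivative at the origin is computed by hand.
-/

theorem hasDerivAt_sq_sqrt_quadratic_add_affine {A b u P e : ℝ} (hA : 0 < A) :
    HasDerivAt (fun t : ℝ => (√(A + 2 * b * t + u * t ^ 2) + (P + e * t)) ^ 2)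
      (2 * (√A + P) * (b / √A + e)) 0 := by
  have hq : HasDerivAt (fun t : ℝ => A + 2 * b * t + u * t ^ 2) (2 * b) 0 := by
    simpa [Pi.add_def] using (((hasDerivAt_id (0 : ℝ)).const_mul (2 * b)).const_add A).add
      ((hasDerivAt_pow 2 (0 : ℝ)).const_mul u)
  have hsqrt : HasDerivAt (fun t : ℝ => √(A + 2 * b * t + u * t ^ 2)) (2 * b / (2 * √A)) 0 := by
    simpa using hq.sqrt (by simpa using hA.ne')
  have hlin : HasDerivAt (fun t : ℝ => P + e * t) e 0 := by
    simpa using ((hasDerivAt_id (0 : ℝ)).const_mul e).const_add P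
  refine ((hsqrt.add hlin).pow 2).congr_deriv ?_
  rw [mul_div_mul_left b (√A) two_ne_zero]
  simp

theorem mixed_deriv_sq_sqrt_quadratic_add_affine (c b u p₀ p₁ p₂ : ℝ) (hc : 0 ≤ c) :
    deriv (fun s : ℝ => deriv (fun t : ℝ =>
        (√(1 + c * s ^ 2 + 2 * (b * s) * t + u * t ^ 2) + (p₀ + p₁ * s + p₂ * t)) ^ 2) 0) 0
      = 2 * (p₁ * p₂ + b * (1 + p₀)) := by
  have hinner : ∀ s : ℝ, deriv (fun t : ℝ =>
        (√(1 + c * s ^ 2 + 2 * (b * s) * t + u * t ^ 2) + (p₀ + p₁ * s + p₂ * t)) ^ 2) 0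
      = 2 * (√(1 + c * s ^ 2) + (p₀ + p₁ * s)) * (b * s / √(1 + c * s ^ 2) + p₂) := fun s =>
    (hasDerivAt_sq_sqrt_quadratic_add_affine (by positivity)).deriv
  have hsqrt : HasDerivAt (fun s : ℝ => √(1 + c * s ^ 2)) 0 0 := by
    simpa using (((hasDerivAt_pow 2 (0 : ℝ)).const_mul c).const_add 1).sqrt (by simp)
  have hlin : HasDerivAt (fun s : ℝ => p₀ + p₁ * s) p₁ 0 := by
    simpa using ((hasDerivAt_id (0 : ℝ)).const_mul p₁).const_add p₀
  have hquot : HasDerivAt (fun s : ℝ => b * s / √(1 + c * s ^ 2)) b 0 := by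
    simpa [Pi.div_def] using ((hasDerivAt_id (0 : ℝ)).const_mul b).div hsqrt (by simp)
  simp only [hinner]
  refine ((((hsqrt.add hlin).const_mul 2).mul (hquot.add_const p₂)).congr_deriv ?_).deriv
  simp only [zero_add, mul_zero, ne_eq, OfNat.ofNat_ne_zero, not_false_eq_true, zero_pow, add_zero,
    Real.sqrt_one, div_one, Pi.add_apply]
  ring

theorem randers_fundamental_tensor_of_orthogonal {M : Type*} [AddCommGroup M] [Module ℝ M]
    (ip : M →ₗ[ℝ] M →ₗ[ℝ] ℝ) (hsymm : ∀ x y : M, ip x y = ip y x)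
    (X Y W U : M) (hYY : ip Y Y = 1) (hYW : ip Y W = 0) (hYU : ip Y U = 0) (hWW : 0 ≤ ip W W) :
    (1 / 2) * deriv (fun s : ℝ => deriv (fun t : ℝ =>
        (√(ip (Y + s • W + t • U) (Y + s • W + t • U)) + ip X (Y + s • W + t • U)) ^ 2) 0) 0
      = ip X W * ip X U + ip W U * (1 + ip X Y) := by
  have hquad : ∀ s t : ℝ, ip (Y + s • W + t • U) (Y + s • W + t • U)
      = 1 + ip W W * s ^ 2 + 2 * (ip W U * s) * t + ip U U * t ^ 2 := by
    intro s t
    simp only [map_add, map_smul, LinearMap.add_apply, LinearMap.smul_apply, smul_eq_mul,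
      hsymm U W, hsymm W Y, hsymm U Y, hYY, hYW, hYU]
    ring
  have haffine : ∀ s t : ℝ, ip X (Y + s • W + t • U) = ip X Y + ip X W * s + ip X U * t := by
    intro s t
    simp only [map_add, map_smul, smul_eq_mul]
    ring
  simp only [hquad, haffine, mixed_deriv_sq_sqrt_quadratic_add_affine _ _ _ _ _ _ hWW]
  ring

section LeviCivita

variable {L : Type*} [LieRing L] [LieAlgebra ℝ L]

theorem levi_civita_eq_half_lie (ip : L →ₗ[ℝ] L →ₗ[ℝ] ℝ) (hsymm : ∀ x y : L, ip x y = ip y x)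
    (hnondeg : ∀ v : L, (∀ z : L, ip v z = 0) → v = 0)
    (had : ∀ x y z : L, ip ⁅x, y⁆ z = - ip y ⁅x, z⁆)
    (nabla : L →ₗ[ℝ] L →ₗ[ℝ] L)
    (koszul : ∀ x y z : L,
      2 * ip (nabla x y) z = ip ⁅x, y⁆ z - ip ⁅y, z⁆ x + ip ⁅z, x⁆ y)
    (x y : L) : nabla x y = (1 / 2 : ℝ) • ⁅x, y⁆ := by
  have hcyc₁ : ∀ z, ip ⁅y, z⁆ x = ip ⁅x, y⁆ z := fun z => by
    rw [had, hsymm z, ← lie_skew x y, map_neg, LinearMap.neg_apply]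
  have hcyc₂ : ∀ z, ip ⁅z, x⁆ y = ip ⁅x, y⁆ z := fun z => by
    rw [← lie_skew z x, map_neg, LinearMap.neg_apply, had, neg_neg, hsymm]
  rw [← sub_eq_zero]
  refine hnondeg _ fun z => ?_
  have hz := koszul x y z
  simp only [map_sub, map_smul, LinearMap.sub_apply, LinearMap.smul_apply, smul_eq_mul,
    hcyc₁, hcyc₂] at hz ⊢
  linarith

theorem curvature_of_eq_half_lie (nabla : L →ₗ[ℝ] L →ₗ[ℝ] L)
    (hnabla : ∀ x y : L, nabla x y = (1 / 2 : ℝ) • ⁅x, y⁆) (x y z : L) :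
    nabla x (nabla y z) - nabla y (nabla x z) - nabla ⁅x, y⁆ z = -(1 / 4 : ℝ) • ⁅⁅x, y⁆, z⁆ := by
  simp only [hnabla, lie_smul, lie_lie]
  module

end LeviCivita

theorem flag_curvature_numerator_biinvariant_general
    {V : Type*} [LieRing V] [LieAlgebra ℝ V]
    (ip0 : V →ₗ[ℝ] V →ₗ[ℝ] ℝ)
    (ip0_symm : ∀ x y : V, ip0 x y = ip0 y x)
    (ip0_pos : ∀ x : V, x ≠ 0 → 0 < ip0 x x)
    (ip0_ad : ∀ x y z : V, ip0 ⁅x, y⁆ z = - ip0 y ⁅x, z⁆)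
    (X : V)
    (F : V → ℝ) (hF : ∀ Z : V, F Z = Real.sqrt (ip0 Z Z) + ip0 X Z)
    (nabla : V →ₗ[ℝ] V →ₗ[ℝ] V)
    (koszul : ∀ x y z : V,
      2 * ip0 (nabla x y) z = ip0 ⁅x, y⁆ z - ip0 ⁅y, z⁆ x + ip0 ⁅z, x⁆ y)
    (Y U : V) (hYY : ip0 Y Y = 1) (hYU : ip0 Y U = 0) :
    (1 / 2) * deriv (fun s : ℝ => deriv (fun t : ℝ =>
        (F (Y + s • (nabla U (nabla Y Y) - nabla Y (nabla U Y) - nabla ⁅U, Y⁆ Y)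
          + t • U)) ^ 2) 0) 0
      = (1 / 4) * (ip0 ⁅Y, ⁅U, Y⁆⁆ X * ip0 X U
          + ip0 ⁅Y, ⁅U, Y⁆⁆ U * (1 + ip0 X Y)) := by
  have hnondeg : ∀ v : V, (∀ z : V, ip0 v z = 0) → v = 0 := fun v hv => by
    by_contra hv0
    exact (ip0_pos v hv0).ne' (hv v)
  have hpsd : ∀ x : V, 0 ≤ ip0 x x := fun x => by
    rcases eq_or_ne x 0 with rfl | hx
    · simp
    · exact (ip0_pos x hx).le
  have hR : nabla U (nabla Y Y) - nabla Y (nabla U Y) - nabla ⁅U, Y⁆ Y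
      = (1 / 4 : ℝ) • ⁅Y, ⁅U, Y⁆⁆ := by
    rw [curvature_of_eq_half_lie nabla
      (levi_civita_eq_half_lie ip0 ip0_symm hnondeg ip0_ad nabla koszul), ← lie_skew, smul_neg,
      neg_smul, neg_neg]
  have hYR : ip0 Y ((1 / 4 : ℝ) • ⁅Y, ⁅U, Y⁆⁆) = 0 := by
    have h := ip0_ad Y Y ⁅U, Y⁆
    rw [lie_self, map_zero, LinearMap.zero_apply, zero_eq_neg] at h
    rw [map_smul, h, smul_zero]
  simp only [hF, hR]
  rw [randers_fundamental_tensor_of_orthogonal ip0 ip0_symm X Y _ U hYY hYR hYU (hpsd _)]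
  simp only [map_smul, LinearMap.smul_apply, smul_eq_mul, ip0_symm X]
  ring

/-- **Numerator of the flag curvature in Theorem 2.2, bi-invariant case.**
`ip0` is an ad-invariant inner product on the Lie algebra, `X` satisfies `⟨X,X⟩₀ < 1`,
`F(Z) = √⟨Z,Z⟩₀ + ⟨X,Z⟩₀` is the Randers norm with fundamental tensor
`g_Y(A,B) = (1/2) ∂²/∂s∂t [F(Y+sA+tB)²]|_{s=t=0}`, and `R` is the curvature of the
Levi-Civita product `nabla` of `⟨·,·⟩₀`.  For `Y, U` orthonormal with respect to `⟨·,·⟩₀`,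
`g_Y(R(U,Y)Y, U) = (1/4)(⟨[Y,[U,Y]],X⟩₀⟨X,U⟩₀ + ⟨[Y,[U,Y]],U⟩₀(1+⟨X,Y⟩₀))`. -/
theorem flag_curvature_numerator_biinvariant
    {V : Type*} [LieRing V] [LieAlgebra ℝ V] [FiniteDimensional ℝ V]
    (ip0 : V →ₗ[ℝ] V →ₗ[ℝ] ℝ)
    (ip0_symm : ∀ x y : V, ip0 x y = ip0 y x)
    (ip0_pos : ∀ x : V, x ≠ 0 → 0 < ip0 x x)
    (ip0_ad : ∀ x y z : V, ip0 ⁅x, y⁆ z = - ip0 y ⁅x, z⁆)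
    (X : V) (hX : ip0 X X < 1)
    (F : V → ℝ) (hF : ∀ Z : V, F Z = Real.sqrt (ip0 Z Z) + ip0 X Z)
    (nabla : V →ₗ[ℝ] V →ₗ[ℝ] V)
    (koszul : ∀ x y z : V,
      2 * ip0 (nabla x y) z = ip0 ⁅x, y⁆ z - ip0 ⁅y, z⁆ x + ip0 ⁅z, x⁆ y)
    (Y U : V) (hYY : ip0 Y Y = 1) (hUU : ip0 U U = 1) (hYU : ip0 Y U = 0) :
    (1 / 2) * deriv (fun s : ℝ => deriv (fun t : ℝ =>
        (F (Y + s • (nabla U (nabla Y Y) - nabla Y (nabla U Y) - nabla ⁅U, Y⁆ Y)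
          + t • U)) ^ 2) 0) 0
      = (1 / 4) * (ip0 ⁅Y, ⁅U, Y⁆⁆ X * ip0 X U
          + ip0 ⁅Y, ⁅U, Y⁆⁆ U * (1 + ip0 X Y)) :=
  flag_curvature_numerator_biinvariant_general ip0 ip0_symm ip0_pos ip0_ad X F hF nabla koszul Y U
    hYY hYU
end
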